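/- arXiv:1703.01137 — 6 statements merged into one kernel-verified Lean document; each statement's English description precedes it below -/
import Mathlib

section
/- Let $\mathcal{X}$ be a Banach lattice and $f : \mathcal{X} \to (-\infty, \infty]$ a proper convex and monotone function (i.e., $X \le Y$ implies $f(X) \le f(Y)$). Then $f$ is continuous on the interior of its domain $\{X \in \mathcal{X} \mid f(X) < \infty\}$. In particular, any finite convex monotone function on a Banach lattice is norm-continuous. -/
open scoped Topology

/-!
Statement 2: A proper convex monotone function on a Banach lattice is continuous
on the interior of its domain; in particular a finite convex monotone function
is norm-continuous.
-/

theorem stmt2 {X : Type*} [NormedAddCommGroup X] [Lattice X] [IsOrderedAddMonoid X]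
    [HasSolidNorm X] [NormedSpace ℝ X]
    [CompleteSpace X]
    (f : X → EReal)
    (hproper : ∀ x, f x ≠ ⊥) (hdom : ∃ x, f x ≠ ⊤)
    (hconv : ∀ x y : X, ∀ t : ℝ, 0 ≤ t → t ≤ 1 →
      f (t • x + (1 - t) • y) ≤ (t : EReal) * f x + ((1 - t : ℝ) : EReal) * f y)
    (hmono : ∀ x y : X, x ≤ y → f x ≤ f y) :
    ContinuousOn f (interior {x | f x ≠ ⊤}) ∧
    ((∀ x, f x ≠ ⊤) → Continuous f) := by
  classical
  set g : X → ℝ := fun x => (f x).toReal with hg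
  have hfr : ∀ x : X, f x ≠ ⊤ → f x = ((g x : ℝ) : EReal) :=
    fun x hx => (EReal.coe_toReal hx (hproper x)).symm
  -- the domain is convex
  have hdomconv : Convex ℝ {x : X | f x ≠ ⊤} := by
    intro x hx y hy a b ha hb hab
    simp only [Set.mem_setOf_eq] at hx hy ⊢
    have h := hconv x y a ha (by linarith)
    rw [show (1 - a : ℝ) = b by linarith] at h
    intro htop
    rw [htop, hfr x hx, hfr y hy, ← EReal.coe_mul, ← EReal.coe_mul, ← EReal.coe_add, top_le_iff] at h
    exact EReal.coe_ne_top _ h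
  -- f is bounded above on a ball around each interior point of the domain
  have key : ∀ x₀ ∈ interior {x : X | f x ≠ ⊤}, ∃ r > 0, ∃ M : ℝ,
      (∀ y ∈ Metric.ball x₀ r, f y ≤ (M : EReal)) := by
    intro x₀ hx₀
    obtain ⟨ε', hε', hball⟩ := Metric.mem_nhds_iff.1 (mem_interior_iff_mem_nhds.1 hx₀)
    by_contra hcon
    push_neg at hcon
    have hseq : ∀ n : ℕ, ∃ y, y ∈ Metric.ball x₀ ((ε' / 4) * (1 / 2) ^ n) ∧
        ((n : ℝ) : EReal) < f y := by
      intro n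
      obtain ⟨y, hy, hfy⟩ := hcon ((ε' / 4) * (1 / 2) ^ n) (by positivity) n
      exact ⟨y, hy, hfy⟩
    choose x hx hfx using hseq
    set u : ℕ → X := fun n => |x n - x₀| with hu
    have hb : ∀ n : ℕ, ‖u n‖ ≤ (ε' / 4) * (1 / 2) ^ n := by
      intro n
      rw [hu]
      simp only
      rw [norm_abs_eq_norm]
      exact (mem_ball_iff_norm.1 (hx n)).le
    have hgeom : Summable (fun n : ℕ => (ε' / 4) * (1 / 2 : ℝ) ^ n) :=
      summable_geometric_two.mul_left _
    have hsummable : Summable u := Summable.of_norm_bounded hgeom hb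
    set s : X := ∑' n, u n with hs
    have hsum_geom : HasSum (fun n : ℕ => (ε' / 4) * (1 / 2 : ℝ) ^ n) (ε' / 2) := by
      have := hasSum_geometric_two.mul_left (ε' / 4)
      convert this using 1
      case e'_6 => ring
      case e'_3 => rfl
    have hsnorm : ‖s‖ ≤ ε' / 2 := tsum_of_norm_bounded hsum_geom hb
    have hymem : x₀ + s ∈ Metric.ball x₀ ε' := by
      rw [mem_ball_iff_norm]
      simp only [add_sub_cancel_left]
      linarith
    have hytop : f (x₀ + s) ≠ ⊤ := hball hymem
    have hle : ∀ n : ℕ, f (x n) ≤ f (x₀ + s) := by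
      intro n
      have h1 : x n ≤ x₀ + u n := by
        have := le_abs_self (x n - x₀)
        rw [hu]
        simp only
        rw [← sub_le_iff_le_add']
        exact this
      have h2 : u n ≤ s := Summable.le_tsum hsummable n (fun m _ => abs_nonneg _)
      exact le_trans (hmono _ _ h1) (hmono _ _ (by exact add_le_add_right h2 x₀))
    have hlt : ∀ n : ℕ, ((n : ℝ) : EReal) < f (x₀ + s) :=
      fun n => lt_of_lt_of_le (hfx n) (hle n)
    obtain ⟨n, hn⟩ := exists_nat_gt (g (x₀ + s))
    have := hlt n
    rw [hfr _ hytop, EReal.coe_lt_coe_iff] at this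
    linarith
  -- g is convex on the interior of the domain
  have hgconv : ConvexOn ℝ (interior {x : X | f x ≠ ⊤}) g := by
    refine ⟨hdomconv.interior, ?_⟩
    intro x hx y hy a b ha hb hab
    have hx' : f x ≠ ⊤ := interior_subset hx
    have hy' : f y ≠ ⊤ := interior_subset hy
    have hxy' : f (a • x + b • y) ≠ ⊤ :=
      interior_subset (hdomconv.interior hx hy ha hb hab)
    have h := hconv x y a ha (by linarith)
    rw [show (1 - a : ℝ) = b by linarith] at h
    rw [hfr _ hx', hfr _ hy', hfr _ hxy', ← EReal.coe_mul, ← EReal.coe_mul,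
      ← EReal.coe_add, EReal.coe_le_coe_iff] at h
    simpa using h
  -- f is continuous at each interior point of the domain
  have hcont : ∀ x₀ ∈ interior {x : X | f x ≠ ⊤}, ContinuousAt f x₀ := by
    intro x₀ hx₀
    obtain ⟨r, hr, M, hM⟩ := key x₀ hx₀
    have hgcont : ContinuousOn g (interior {x : X | f x ≠ ⊤}) := by
      have htfae := (hgconv.continuousOn_tfae isOpen_interior ⟨x₀, hx₀⟩).out 3 1
      apply htfae.mp
      refine ⟨x₀, hx₀, M, ?_⟩
      simp only [Filter.eventually_map]
      filter_upwards [Metric.ball_mem_nhds x₀ hr] with y hy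
      have h1 := hM y hy
      have h2 : f y ≠ ⊤ := fun ht => by simp [ht] at h1
      rw [hfr y h2, EReal.coe_le_coe_iff] at h1
      exact h1
    have hgat : ContinuousAt g x₀ :=
      hgcont.continuousAt (isOpen_interior.mem_nhds hx₀)
    have heq : ∀ᶠ y in 𝓝 x₀, ((g y : ℝ) : EReal) = f y := by
      filter_upwards [isOpen_interior.mem_nhds hx₀] with y hy
      exact (hfr y (interior_subset hy)).symm
    have hcoe : ContinuousAt (fun y => ((g y : ℝ) : EReal)) x₀ :=
      (continuous_coe_real_ereal.continuousAt).comp hgat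
    exact hcoe.congr heq
  constructor
  · exact fun x hx => (hcont x hx).continuousWithinAt
  · intro hfin
    have huniv : interior {x : X | f x ≠ ⊤} = Set.univ := by
      have : {x : X | f x ≠ ⊤} = Set.univ := Set.eq_univ_iff_forall.2 hfin
      rw [this, interior_univ]
    rw [continuous_iff_continuousAt]
    intro x
    exact hcont x (by rw [huniv]; trivial)
end

section
/- Let $\rho: \mathcal{L}^{\infty}(\Omega, \mathcal{F}) \to \mathbb{R}$ be a finite, convex, monotone function, and suppose $\mu \in \mathbf{ba}$ satisfies $\rho^*(\mu) := \sup_{X} \int X d\mu - \rho(X) < \infty$. If $\rho$ is continuous from above (i.e., $X_n \downarrow X$ pointwise with $X_n, X \in \mathcal{L}^{\infty}$ implies $\rho(X_n) \downarrow \rho(X)$), then $\mu$ is countably additive, i.e., for every sequence of sets $A_n \in \mathcal{F}$ decreasing to $\emptyset$ one has $\mu(A_n) \to 0$. -/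
/-!
Finiteness of `ρ*(μ)` gives `k μ(X) ≤ ρ*(μ) + ρ(k X)` for every real `k`. For `X ≥ 0` and
`k → -∞` this makes `μ` positive, since `ρ(k X) ≤ ρ(0)`; applied to `X = 1_{A_n}` with `A_n ↓ ∅`, continuity from
above gives `ρ(k 1_{A_n}) → ρ(0)`, so `limsup μ(A_n) ≤ (ρ*(μ) + ρ(0)) / k` for every `k > 0`.
-/

open MeasureTheory

def BM (Ω : Type*) [MeasurableSpace Ω] : Submodule ℝ (Ω → ℝ) where
  carrier := {f | Measurable f ∧ ∃ C : ℝ, ∀ ω, |f ω| ≤ C}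
  add_mem' := by
    rintro f g ⟨hf, Cf, hCf⟩ ⟨hg, Cg, hCg⟩
    exact ⟨hf.add hg, Cf + Cg, fun ω =>
      (abs_add_le _ _).trans (add_le_add (hCf ω) (hCg ω))⟩
  zero_mem' := ⟨measurable_const, 0, fun ω => by simp⟩
  smul_mem' := by
    rintro c f ⟨hf, Cf, hCf⟩
    refine ⟨hf.const_smul c, |c| * Cf, fun ω => ?_⟩
    have h : |(c • f) ω| = |c| * |f ω| := by simp [abs_mul]
    rw [h]
    exact mul_le_mul_of_nonneg_left (hCf ω) (abs_nonneg c)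

variable {Ω : Type*} [MeasurableSpace Ω]

noncomputable instance : PartialOrder (BM Ω) :=
  PartialOrder.lift (fun f => (f : Ω → ℝ)) Subtype.coe_injective

noncomputable def indBM (A : Set Ω) (hA : MeasurableSet A) : BM Ω :=
  ⟨A.indicator fun _ => (1 : ℝ),
    (measurable_const (a := (1 : ℝ))).indicator hA, 1, fun ω => by
      by_cases h : ω ∈ A <;> simp [Set.indicator_apply, h]⟩

noncomputable def rstar (ρ : BM Ω → ℝ) (μ : BM Ω → ℝ) : EReal :=
  ⨆ X : BM Ω, ((μ X - ρ X : ℝ) : EReal)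


open Filter Topology

theorem nonpos_of_forall_pos_mul_le {a c : ℝ} (h : ∀ k > 0, k * a ≤ c) : a ≤ 0 := by
  by_contra! ha
  have hk := h ((|c| + 1) / a) (by positivity)
  rw [div_mul_cancel₀ _ ha.ne'] at hk
  linarith [le_abs_self c]

theorem tendsto_zero_of_forall_pos_eventually_mul_le {α : Type*} {l : Filter α} {u : α → ℝ}
    {c : ℝ} (hu : ∀ x, 0 ≤ u x) (h : ∀ k > 0, ∀ᶠ x in l, k * u x ≤ c) :
    Tendsto u l (𝓝 0) := by
  refine tendsto_order.2 ⟨fun a ha => .of_forall fun x => ha.trans_le (hu x), fun b hb => ?_⟩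
  filter_upwards [h ((|c| + 1) / b) (by positivity)] with x hx
  by_contra! hbx
  have hkb := mul_le_mul_of_nonneg_left hbx (by positivity : 0 ≤ (|c| + 1) / b)
  rw [div_mul_cancel₀ _ hb.ne'] at hkb
  linarith [le_abs_self c]

namespace BM

theorem le_def {X Y : BM Ω} : X ≤ Y ↔ (X : Ω → ℝ) ≤ Y := Iff.rfl

theorem indBM_nonneg (A : Set Ω) (hA : MeasurableSet A) : 0 ≤ indBM A hA :=
  le_def.2 <| Set.indicator_nonneg fun _ _ => zero_le_one

theorem smul_indBM_le_smul_indBM {A B : Set Ω} (hA : MeasurableSet A) (hB : MeasurableSet B)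
    (hAB : A ⊆ B) {k : ℝ} (hk : 0 ≤ k) : k • indBM A hA ≤ k • indBM B hB := fun ω =>
  mul_le_mul_of_nonneg_left (Set.indicator_le_indicator_of_subset hAB (fun _ => zero_le_one) ω) hk

theorem tendsto_smul_indBM_of_iInter_eq_empty {A : ℕ → Set Ω} (hA : ∀ n, MeasurableSet (A n))
    (hAanti : Antitone A) (hAempty : ⋂ n, A n = ∅) (k : ℝ) (ω : Ω) :
    Tendsto (fun n => (k • indBM (A n) (hA n) : Ω → ℝ) ω) atTop (𝓝 0) := by
  obtain ⟨N, hN⟩ := Set.iInter_eq_empty_iff.1 hAempty ω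
  refine tendsto_const_nhds.congr' ?_
  filter_upwards [eventually_ge_atTop N] with n hn
  show 0 = k * (A n).indicator (fun _ => 1) ω
  rw [Set.indicator_of_notMem fun h => hN (hAanti hn h), mul_zero]

end BM

section Conjugate

variable {ρ μ : BM Ω → ℝ}

theorem rstar_ne_bot (ρ μ : BM Ω → ℝ) : rstar ρ μ ≠ ⊥ :=
  ne_bot_of_le_ne_bot (EReal.coe_ne_bot (μ 0 - ρ 0))
    (le_iSup (fun X : BM Ω => ((μ X - ρ X : ℝ) : EReal)) 0)

theorem sub_le_toReal_rstar (hfin : rstar ρ μ ≠ ⊤) (X : BM Ω) :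
    μ X - ρ X ≤ (rstar ρ μ).toReal := by
  have h : ((μ X - ρ X : ℝ) : EReal) ≤ rstar ρ μ :=
    le_iSup (fun X : BM Ω => ((μ X - ρ X : ℝ) : EReal)) X
  rwa [← EReal.coe_toReal hfin (rstar_ne_bot ρ μ), EReal.coe_le_coe_iff] at h

theorem mul_le_toReal_rstar_add (hlin : IsLinearMap ℝ μ) (hfin : rstar ρ μ ≠ ⊤) (k : ℝ)
    (X : BM Ω) : k * μ X ≤ (rstar ρ μ).toReal + ρ (k • X) := by
  have h := sub_le_toReal_rstar hfin (k • X)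
  rw [hlin.map_smul, smul_eq_mul] at h
  linarith

theorem nonneg_of_rstar_ne_top (hmono : Monotone ρ) (hlin : IsLinearMap ℝ μ)
    (hfin : rstar ρ μ ≠ ⊤) {X : BM Ω} (hX : 0 ≤ X) : 0 ≤ μ X := by
  refine neg_nonpos.1 <|
    nonpos_of_forall_pos_mul_le (c := (rstar ρ μ).toReal + ρ 0) fun k hk => ?_
  have hkX : (-k) • X ≤ 0 := fun ω =>
    mul_nonpos_of_nonpos_of_nonneg (neg_nonpos.2 hk.le) (BM.le_def.1 hX ω)
  calc k * -μ X = -k * μ X := by ring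
    _ ≤ (rstar ρ μ).toReal + ρ ((-k) • X) := mul_le_toReal_rstar_add hlin hfin (-k) X
    _ ≤ (rstar ρ μ).toReal + ρ 0 := by gcongr; exact hmono hkX

end Conjugate

theorem stmt4_general (ρ : BM Ω → ℝ)
    -- ρ is monotone
    (hmono : ∀ X Y : BM Ω, X ≤ Y → ρ X ≤ ρ Y)
    -- ρ is continuous from above
    (hca : ∀ (X : ℕ → BM Ω) (Y : BM Ω),
      (∀ n m : ℕ, n ≤ m → X m ≤ X n) →
      (∀ ω, Filter.Tendsto (fun n => (X n : Ω → ℝ) ω) Filter.atTop (nhds ((Y : Ω → ℝ) ω))) →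
      Filter.Tendsto (fun n => ρ (X n)) Filter.atTop (nhds (ρ Y)))
    -- μ ∈ ba with finite conjugate
    (μ : BM Ω → ℝ) (hlin : IsLinearMap ℝ μ)
    (hfin : rstar ρ μ ≠ ⊤) :
    -- μ is countably additive
    ∀ (A : ℕ → Set Ω) (hA : ∀ n, MeasurableSet (A n)),
      (∀ n m : ℕ, n ≤ m → A m ⊆ A n) → (⋂ n, A n) = ∅ →
      Filter.Tendsto (fun n => μ (indBM (A n) (hA n))) Filter.atTop (nhds 0) := by
  intro A hA hAanti hAempty
  have hρ (k : ℝ) (hk : 0 ≤ k) :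
      Tendsto (fun n => ρ (k • indBM (A n) (hA n))) atTop (𝓝 (ρ 0)) :=
    hca _ 0 (fun n m hnm => BM.smul_indBM_le_smul_indBM _ _ (hAanti n m hnm) hk)
      (BM.tendsto_smul_indBM_of_iInter_eq_empty hA (fun n m hnm => hAanti n m hnm) hAempty k)
  refine tendsto_zero_of_forall_pos_eventually_mul_le (c := (rstar ρ μ).toReal + ρ 0 + 1)
    (fun n => nonneg_of_rstar_ne_top (fun X Y => hmono X Y) hlin hfin (BM.indBM_nonneg _ _))
    fun k hk => ?_
  filter_upwards [(hρ k hk.le).eventually_lt_const (lt_add_one (ρ 0))] with n hn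
  linarith [mul_le_toReal_rstar_add hlin hfin k (indBM (A n) (hA n))]

theorem stmt4 (ρ : BM Ω → ℝ)
    -- ρ is convex
    (hconv : ∀ X Y : BM Ω, ∀ t : ℝ, 0 ≤ t → t ≤ 1 →
      ρ (t • X + (1 - t) • Y) ≤ t * ρ X + (1 - t) * ρ Y)
    -- ρ is monotone
    (hmono : ∀ X Y : BM Ω, X ≤ Y → ρ X ≤ ρ Y)
    -- ρ is continuous from above
    (hca : ∀ (X : ℕ → BM Ω) (Y : BM Ω),
      (∀ n m : ℕ, n ≤ m → X m ≤ X n) →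
      (∀ ω, Filter.Tendsto (fun n => (X n : Ω → ℝ) ω) Filter.atTop (nhds ((Y : Ω → ℝ) ω))) →
      Filter.Tendsto (fun n => ρ (X n)) Filter.atTop (nhds (ρ Y)))
    -- μ ∈ ba with finite conjugate
    (μ : BM Ω → ℝ) (hlin : IsLinearMap ℝ μ)
    (hbdd : ∃ M : ℝ, ∀ (X : BM Ω) (C : ℝ), (∀ ω, |(X : Ω → ℝ) ω| ≤ C) → |μ X| ≤ M * C)
    (hfin : rstar ρ μ ≠ ⊤) :
    -- μ is countably additive
    ∀ (A : ℕ → Set Ω) (hA : ∀ n, MeasurableSet (A n)),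
      (∀ n m : ℕ, n ≤ m → A m ⊆ A n) → (⋂ n, A n) = ∅ →
      Filter.Tendsto (fun n => μ (indBM (A n) (hA n))) Filter.atTop (nhds 0) :=
  stmt4_general ρ hmono hca μ hlin hfin
end

section
/- Let $\rho_{\mathcal{R}}$ be a finite, coherent risk measure on $L^{\infty}_{\mathbb{P}}$ that is continuous from above, with dual representation $\rho_{\mathcal{R}}(X) = \sup_{\mu \in E_0} \int X\, d\mu$ where $E_0 = \mathrm{dom}(\rho_{\mathcal{R}}^*) \subseteq (\mathbf{ca}_{\mathbb{P}})_+$ is convex, countably convex, and $\sigma(\mathbf{ca}_{\mathbb{P}}, L^{\infty}_{\mathbb{P}})$-compact. Then there exists $\mu \in E_0$ with $\mu \approx \mathbb{P}$ (i.e., $\mu$ and $\mathbb{P}$ have the same null sets) if and only if $\rho_{\mathcal{R}}$ is sensitive, i.e., $\rho_{\mathcal{R}}(X) > \rho_{\mathcal{R}}(0) = 0$ for all $X \in (L^{\infty}_{\mathbb{P}})_{++}$. -/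
/-!
Statement 9 (Lemma lem:cohpcal): For a finite coherent risk measure continuous
from above with compact dual set `E₀ ⊆ (ca_ℙ)₊`, there is `μ ∈ E₀` equivalent
to `ℙ` if and only if the risk measure is sensitive.
-/

open MeasureTheory ENNReal

variable {Ω : Type*} [MeasurableSpace Ω]

/-- Embedding of measures into `(𝓛^∞ → ℝ)` realising the `σ(ca, L^∞)`
topology (product topology on the image). -/
noncomputable def weakEmbed (μ : Measure Ω) : BM Ω → ℝ :=
  fun X => ∫ ω, (X : Ω → ℝ) ω ∂μ

lemma measZ (P μ : Measure Ω) [IsFiniteMeasure μ] [SigmaFinite P] (hac : μ ≪ P) :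
    μ {ω | μ.rnDeriv P ω = 0} = 0 := by
  have hZ : MeasurableSet {ω | μ.rnDeriv P ω = 0} :=
    Measure.measurable_rnDeriv μ P (measurableSet_singleton 0)
  rw [← Measure.setLIntegral_rnDeriv' hac hZ,
    setLIntegral_congr_fun hZ (fun x hx => hx)]
  simp

lemma nullOn (P μ : Measure Ω) [IsFiniteMeasure μ] [SigmaFinite P] (hac : μ ≪ P)
    {A : Set Ω} (hA : MeasurableSet A) (h : μ A = 0) :
    P (A ∩ {ω | μ.rnDeriv P ω ≠ 0}) = 0 := by
  have hint : ∫⁻ ω in A, μ.rnDeriv P ω ∂P = 0 := by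
    rw [Measure.setLIntegral_rnDeriv' hac hA, h]
  have hae : ∀ᵐ ω ∂(P.restrict A), μ.rnDeriv P ω = 0 :=
    (lintegral_eq_zero_iff (Measure.measurable_rnDeriv μ P)).mp hint
  have hm : MeasurableSet {ω | μ.rnDeriv P ω ≠ 0} :=
    (Measure.measurable_rnDeriv μ P (measurableSet_singleton 0)).compl
  have h0 : (P.restrict A) {ω | μ.rnDeriv P ω ≠ 0} = 0 := ae_iff.mp hae
  rwa [Measure.restrict_apply hm, Set.inter_comm] at h0

theorem stmt9 (P : Measure Ω) [IsProbabilityMeasure P]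
    (ρ : BM Ω → ℝ) (E₀ : Set (Measure Ω))
    -- E₀ = dom(ρ*) ⊆ (ca_ℙ)₊ consists of finite measures ≪ ℙ
    (hE₀fin : ∀ μ ∈ E₀, IsFiniteMeasure μ) (hE₀ac : ∀ μ ∈ E₀, μ ≪ P)
    (hE₀ne : E₀.Nonempty)
    -- E₀ is convex
    (hconv : ∀ μ ∈ E₀, ∀ ν ∈ E₀, ∀ a b : ℝ≥0∞, a + b = 1 → a • μ + b • ν ∈ E₀)
    -- E₀ is countably convex
    (hcconv : ∀ (μs : ℕ → Measure Ω), (∀ k, μs k ∈ E₀) →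
      ∀ w : ℕ → ℝ≥0∞, (∀ k, w k ≤ 1) → (∑' k, w k = 1) →
      Measure.sum (fun k => w k • μs k) ∈ E₀)
    -- E₀ is σ(ca_ℙ, L^∞_ℙ)-compact
    (hcomp : IsCompact (weakEmbed '' E₀))
    -- ρ has the (coherent) dual representation with supremum over E₀
    (hrep : ∀ X : BM Ω, IsLUB {e : ℝ | ∃ μ ∈ E₀, e = ∫ ω, (X : Ω → ℝ) ω ∂μ} (ρ X))
    -- ρ is coherent (positively homogeneous) and continuous from above
    (hhom : ∀ (X : BM Ω) (t : ℝ), 0 < t → ρ (t • X) = t * ρ X)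
    (hca : ∀ (X : ℕ → BM Ω) (Y : BM Ω),
      (∀ n m : ℕ, n ≤ m → X m ≤ X n) →
      (∀ ω, Filter.Tendsto (fun n => (X n : Ω → ℝ) ω) Filter.atTop (nhds ((Y : Ω → ℝ) ω))) →
      Filter.Tendsto (fun n => ρ (X n)) Filter.atTop (nhds (ρ Y)))
    -- ρ is normalised
    (hnorm : ρ 0 = 0) :
    -- 𝒫 ≠ ∅ iff ρ is sensitive
    (∃ μ ∈ E₀, ∀ A : Set Ω, MeasurableSet A → (μ A = 0 ↔ P A = 0)) ↔
    (∀ X : BM Ω, (∀ᵐ ω ∂P, 0 ≤ (X : Ω → ℝ) ω) →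
      ¬ ((X : Ω → ℝ) =ᵐ[P] 0) → 0 < ρ X) := by
  
  constructor
  · -- equivalent measure ⇒ sensitive
    rintro ⟨μ, hμE, hequiv⟩ X hX0 hXne
    haveI := hE₀fin μ hμE
    obtain ⟨hXm, C, hC⟩ := X.2
    have hint : Integrable (X : Ω → ℝ) μ :=
      (integrable_const C).mono' hXm.aestronglyMeasurable
        (ae_of_all _ fun ω => by simpa using hC ω)
    have hX0μ : 0 ≤ᵐ[μ] (X : Ω → ℝ) := (hE₀ac μ hμE).ae_le hX0
    have hne : ¬ ((X : Ω → ℝ) =ᵐ[μ] 0) := by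
      intro h
      apply hXne
      have hs : MeasurableSet {ω | (X : Ω → ℝ) ω ≠ 0} :=
        (hXm (measurableSet_singleton 0)).compl
      have hμ0 : μ {ω | (X : Ω → ℝ) ω ≠ 0} = 0 := ae_iff.mp h
      exact ae_iff.mpr ((hequiv _ hs).mp hμ0)
    have h0le : 0 ≤ ∫ ω, (X : Ω → ℝ) ω ∂μ := integral_nonneg_of_ae hX0μ
    have hpos : 0 < ∫ ω, (X : Ω → ℝ) ω ∂μ :=
      lt_of_le_of_ne h0le (Ne.symm fun h =>
        hne ((integral_eq_zero_iff_of_nonneg_ae hX0μ hint).mp h))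
    exact lt_of_lt_of_le hpos ((hrep X).1 ⟨μ, hμE, rfl⟩)
  · -- sensitive ⇒ equivalent measure (Halmos–Savage)
    intro hsens
    -- Step 1: E₀ dominates P
    have hdom : ∀ A : Set Ω, MeasurableSet A → P A ≠ 0 → ∃ μ ∈ E₀, μ A ≠ 0 := by
      intro A hA hPA
      by_contra h
      push_neg at h
      set X : BM Ω := ⟨A.indicator 1, measurable_one.indicator hA, 1, fun ω => by
        by_cases hω : ω ∈ A <;> simp [Set.indicator, hω]⟩ with hXdef
      have hXne : ¬ ((X : Ω → ℝ) =ᵐ[P] 0) := by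
        intro hc
        refine hPA (measure_mono_null (fun ω hω => ?_) (ae_iff.mp hc))
        show ¬ (X : Ω → ℝ) ω = 0
        have h1 : (X : Ω → ℝ) ω = 1 := by simp [hXdef, Set.indicator_of_mem hω]
        rw [h1]; exact one_ne_zero
      have hρ : 0 < ρ X := hsens X
        (ae_of_all _ fun ω => Set.indicator_nonneg (fun _ _ => zero_le_one) ω) hXne
      have hub : ρ X ≤ 0 := by
        refine (hrep X).2 ?_
        rintro e ⟨μ, hμ, rfl⟩
        haveI := hE₀fin μ hμ
        have : ∫ ω, (X : Ω → ℝ) ω ∂μ = (μ A).toReal := integral_indicator_one hA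
        rw [this, h μ hμ]
        simp
      linarith
    -- notation
    set Z : Measure Ω → Set Ω := fun μ => {ω | μ.rnDeriv P ω = 0} with hZdef
    have hZm : ∀ μ : Measure Ω, MeasurableSet (Z μ) := fun μ =>
      Measure.measurable_rnDeriv μ P (measurableSet_singleton 0)
    have hZc : ∀ μ : Measure Ω, (Z μ)ᶜ = {ω | μ.rnDeriv P ω ≠ 0} := fun μ => rfl
    set s : Measure Ω → ℝ := fun μ => (P (Z μ)ᶜ).toReal with hsdef
    set S : Set ℝ := s '' E₀ with hSdef
    have hSne : S.Nonempty := hE₀ne.image s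
    have hSbdd : BddAbove S := by
      refine ⟨1, ?_⟩
      rintro e ⟨μ, _, rfl⟩
      have h1 : P (Z μ)ᶜ ≤ 1 := prob_le_one
      calc (P (Z μ)ᶜ).toReal ≤ (1 : ℝ≥0∞).toReal :=
            ENNReal.toReal_mono one_ne_top h1
        _ = 1 := by simp
    set c : ℝ := sSup S with hcdef
    -- Step 2: choose a maximising sequence
    have hseq : ∀ k : ℕ, ∃ μ ∈ E₀, c - 1 / (k + 1) < s μ := by
      intro k
      have h1 : c - 1 / ((k : ℝ) + 1) < c := by
        have : (0:ℝ) < 1 / ((k : ℝ) + 1) := by positivity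
        linarith
      obtain ⟨e, ⟨μ, hμ, rfl⟩, hlt⟩ := exists_lt_of_lt_csSup hSne h1
      exact ⟨μ, hμ, hlt⟩
    choose μs hμsE hμs using hseq
    set w : ℕ → ℝ≥0∞ := fun k => (2:ℝ≥0∞)⁻¹ ^ (k + 1) with hwdef
    have hw1 : ∀ k, w k ≤ 1 := fun k => pow_le_one' (by simp) _
    have hw0 : ∀ k, w k ≠ 0 := fun k => pow_ne_zero _ (by simp)
    have hwsum : ∑' k, w k = 1 := by
      simp_rw [hwdef, pow_succ]
      rw [ENNReal.tsum_mul_right, ENNReal.tsum_geometric, ENNReal.one_sub_inv_two, inv_inv]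
      exact ENNReal.mul_inv_cancel two_ne_zero ofNat_ne_top
    set ν : Measure Ω := Measure.sum (fun k => w k • μs k) with hνdef
    have hνE : ν ∈ E₀ := hcconv μs hμsE w hw1 hwsum
    haveI := hE₀fin ν hνE
    have hνac : ν ≪ P := hE₀ac ν hνE
    have hZν0 : ν (Z ν) = 0 := measZ P ν hνac
    -- Step 3: s ν = c
    have hsν_ge : ∀ k, s (μs k) ≤ s ν := by
      intro k
      haveI := hE₀fin (μs k) (hμsE k)
      have hμk0 : μs k (Z ν) = 0 := by
        have hle : w k * μs k (Z ν) ≤ ν (Z ν) := by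
          calc w k * μs k (Z ν) = (w k • μs k) (Z ν) := by
                rw [Measure.smul_apply, smul_eq_mul]
            _ ≤ ∑' j, (w j • μs j) (Z ν) := ENNReal.le_tsum k
            _ = ν (Z ν) := (Measure.sum_apply _ (hZm ν)).symm
        rw [hZν0, le_zero_iff, mul_eq_zero] at hle
        exact hle.resolve_left (hw0 k)
      have hBk : P (Z ν ∩ (Z (μs k))ᶜ) = 0 := by
        rw [hZc]
        exact nullOn P (μs k) (hE₀ac (μs k) (hμsE k)) (hZm ν) hμk0
      have hle : P (Z (μs k))ᶜ ≤ P (Z ν)ᶜ := by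
        have hsub : (Z (μs k))ᶜ ⊆ (Z ν)ᶜ ∪ (Z ν ∩ (Z (μs k))ᶜ) := by
          intro ω hω
          by_cases h : ω ∈ Z ν
          · exact Or.inr ⟨h, hω⟩
          · exact Or.inl h
        calc P (Z (μs k))ᶜ ≤ P ((Z ν)ᶜ ∪ (Z ν ∩ (Z (μs k))ᶜ)) := measure_mono hsub
          _ ≤ P (Z ν)ᶜ + P (Z ν ∩ (Z (μs k))ᶜ) := measure_union_le _ _
          _ = P (Z ν)ᶜ := by rw [hBk, add_zero]
      exact ENNReal.toReal_mono (measure_ne_top P _) hle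
    have hsνc : s ν = c := by
      refine le_antisymm (le_csSup hSbdd ⟨ν, hνE, rfl⟩) ?_
      have hlim : Filter.Tendsto (fun k : ℕ => c - 1 / ((k:ℝ) + 1))
          Filter.atTop (nhds c) := by
        simpa using (tendsto_const_nhds.sub (tendsto_one_div_add_atTop_nhds_zero_nat (𝕜 := ℝ)))
      exact le_of_tendsto' hlim fun k => le_trans (le_of_lt (hμs k)) (hsν_ge k)
    -- Step 4: P (Z ν) = 0
    have hPZ : P (Z ν) = 0 := by
      by_contra hPZ
      obtain ⟨μ', hμ'E, hμ'Z⟩ := hdom (Z ν) (hZm ν) hPZ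
      haveI := hE₀fin μ' hμ'E
      have hμ'ac : μ' ≪ P := hE₀ac μ' hμ'E
      set ν' : Measure Ω := (2:ℝ≥0∞)⁻¹ • ν + (2:ℝ≥0∞)⁻¹ • μ' with hν'def
      have hν'E : ν' ∈ E₀ := hconv ν hνE μ' hμ'E 2⁻¹ 2⁻¹ ENNReal.inv_two_add_inv_two
      haveI := hE₀fin ν' hν'E
      have hν'ac : ν' ≪ P := hE₀ac ν' hν'E
      have h0 : ν' (Z ν') = 0 := measZ P ν' hν'ac
      have happ : (2:ℝ≥0∞)⁻¹ * ν (Z ν') + (2:ℝ≥0∞)⁻¹ * μ' (Z ν') = 0 := by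
        simpa [hν'def, Measure.add_apply, Measure.smul_apply, smul_eq_mul] using h0
      rw [add_eq_zero, mul_eq_zero, mul_eq_zero] at happ
      have hν0 : ν (Z ν') = 0 := happ.1.resolve_left (by simp)
      have hμ'0 : μ' (Z ν') = 0 := happ.2.resolve_left (by simp)
      have hB1 : P (Z ν' ∩ (Z ν)ᶜ) = 0 := by
        rw [hZc]; exact nullOn P ν hνac (hZm ν') hν0
      have hB2 : P (Z ν' ∩ (Z μ')ᶜ) = 0 := by
        rw [hZc]; exact nullOn P μ' hμ'ac (hZm ν') hμ'0
      have hpos : P (Z ν ∩ (Z μ')ᶜ) ≠ 0 := by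
        intro h
        apply hμ'Z
        have h1 : μ' (Z ν ∩ Z μ') = 0 :=
          measure_mono_null Set.inter_subset_right (measZ P μ' hμ'ac)
        have h2 : μ' (Z ν \ Z μ') = 0 := by
          rw [Set.diff_eq]; exact hμ'ac h
        rw [← measure_inter_add_diff (Z ν) (hZm μ'), h1, h2, add_zero]
      have key : P (Z ν)ᶜ + P (Z ν ∩ (Z μ')ᶜ) ≤ P (Z ν')ᶜ := by
        have hsub : (Z ν)ᶜ ∪ (Z ν ∩ (Z μ')ᶜ) ⊆
            (Z ν')ᶜ ∪ ((Z ν' ∩ (Z ν)ᶜ) ∪ (Z ν' ∩ (Z μ')ᶜ)) := by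
          intro ω hω
          by_cases h : ω ∈ Z ν'
          · rcases hω with h1 | h2
            · exact Or.inr (Or.inl ⟨h, h1⟩)
            · exact Or.inr (Or.inr ⟨h, h2.2⟩)
          · exact Or.inl h
        have hdisj : Disjoint (Z ν)ᶜ (Z ν ∩ (Z μ')ᶜ) :=
          Set.disjoint_left.mpr fun ω h1 h2 => h1 h2.1
        calc P (Z ν)ᶜ + P (Z ν ∩ (Z μ')ᶜ)
            = P ((Z ν)ᶜ ∪ (Z ν ∩ (Z μ')ᶜ)) :=
              (measure_union hdisj ((hZm ν).inter (hZm μ').compl)).symm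
          _ ≤ P ((Z ν')ᶜ ∪ ((Z ν' ∩ (Z ν)ᶜ) ∪ (Z ν' ∩ (Z μ')ᶜ))) := measure_mono hsub
          _ ≤ P (Z ν')ᶜ + P ((Z ν' ∩ (Z ν)ᶜ) ∪ (Z ν' ∩ (Z μ')ᶜ)) := measure_union_le _ _
          _ ≤ P (Z ν')ᶜ + (P (Z ν' ∩ (Z ν)ᶜ) + P (Z ν' ∩ (Z μ')ᶜ)) :=
              add_le_add le_rfl (measure_union_le _ _)
          _ = P (Z ν')ᶜ := by rw [hB1, hB2, add_zero, add_zero]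
      have hlt : c < s ν' := by
        have h1 : s ν + (P (Z ν ∩ (Z μ')ᶜ)).toReal ≤ s ν' := by
          rw [← ENNReal.toReal_add (measure_ne_top P _) (measure_ne_top P _)]
          exact ENNReal.toReal_mono (measure_ne_top P _) key
        have h2 : 0 < (P (Z ν ∩ (Z μ')ᶜ)).toReal :=
          ENNReal.toReal_pos hpos (measure_ne_top P _)
        rw [hsνc] at h1
        linarith
      exact absurd (le_csSup hSbdd ⟨ν', hν'E, rfl⟩) (not_le.mpr hlt)
    -- Step 5: conclude
    refine ⟨ν, hνE, fun A hA => ⟨fun h => ?_, fun h => hνac h⟩⟩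
    have hB : P (A ∩ (Z ν)ᶜ) = 0 := by
      rw [hZc]; exact nullOn P ν hνac hA h
    calc P A = P (A ∩ Z ν) + P (A \ Z ν) := (measure_inter_add_diff A (hZm ν)).symm
      _ = 0 := by
        rw [measure_mono_null Set.inter_subset_right hPZ, Set.diff_eq, hB, add_zero]
end

section
/- Let $\rho_{\mathcal{R}}$ be a finite, normalised, sensitive risk measure on $L^{\infty}_{\mathbb{P}}$ that is continuous from above, so that $\rho_{\mathcal{R}}(X) = \max_{\mu \in \mathrm{dom}(\rho_{\mathcal{R}}^*)} \int X d\mu - \rho_{\mathcal{R}}^*(\mu)$ with the maximum attained. Then the following are equivalent: (i) every $\mu \in E_0 := \{\mu \mid \rho_{\mathcal{R}}^*(\mu) = 0\}$ is equivalent to $\mathbb{P}$; (ii) for all $A \in \mathcal{F}$ with $\mathbb{P}(A) > 0$, $\rho_{\mathcal{R}}(-k\mathbf{1}_A) < 0$ for sufficiently large $k > 0$; (iii) $\rho_{\mathcal{R}}(-X) < 0$ for all $X \in (L^{\infty}_{\mathbb{P}})_{++}$. -/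
/-!
(iii) ⇒ (ii) is immediate. For (ii) ⇒ (iii), a nonzero `X ≥ 0` dominates some `ε 𝟙_A` with
`P A > 0`, and convexity with `ρ 0 = 0` gives `ρ (t Y) ≤ t ρ Y` for `t ∈ [0, 1]`, which carries
`ρ (-k 𝟙_A) < 0` from large `k` down to `k = ε`. The two implications involving (i) come from the
dual representation: at a maximiser `ν ≪ P` for `-X` one has `ρ (-X) = -∫ X dν - ρ*(ν) ≤ 0`, with
equality only if `ν ∈ E₀` and `X = 0` `ν`-a.e.; conversely, if `ν ∈ E₀` and `ν A = 0`, then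
`ρ (-k 𝟙_A) ≥ ∫ -k 𝟙_A dν - ρ*(ν) = 0` for every `k`.
-/

open MeasureTheory

variable {Ω : Type*} [MeasurableSpace Ω]

/-- The conjugate of `ρ` at a (countably additive) measure. -/
noncomputable def rstarM (ρ : BM Ω → ℝ) (ν : Measure Ω) : EReal :=
  ⨆ X : BM Ω, ((∫ ω, (X : Ω → ℝ) ω ∂ν - ρ X : ℝ) : EReal)

lemma exists_pos_measure_le_of_not_ae_eq_zero {α : Type*} [MeasurableSpace α] {μ : Measure α}
    {f : α → ℝ} (hf₀ : ∀ᵐ a ∂μ, 0 ≤ f a) (hf : ¬ f =ᵐ[μ] 0) :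
    ∃ ε : ℝ, 0 < ε ∧ 0 < μ {a | ε ≤ f a} := by
  by_contra! h
  have hsmall : ∀ᵐ a ∂μ, ∀ n : ℕ, f a < 1 / (n + 1) := by
    refine ae_all_iff.2 fun n => ae_iff.2 ?_
    simpa using h (1 / (n + 1)) (by positivity)
  refine hf ?_
  filter_upwards [hf₀, hsmall] with a ha hn
  refine le_antisymm ?_ ha
  by_contra! hpos
  obtain ⟨n, hn'⟩ := exists_nat_one_div_lt hpos
  exact (hn n).not_ge hn'.le

lemma apply_smul_le_mul_of_convex {E : Type*} [AddCommMonoid E] [Module ℝ E] {f : E → ℝ}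
    (hconv : ∀ X Y : E, ∀ t : ℝ, 0 ≤ t → t ≤ 1 → f (t • X + (1 - t) • Y) ≤ t * f X + (1 - t) * f Y)
    (hf₀ : f 0 = 0) (X : E) {t : ℝ} (ht₀ : 0 ≤ t) (ht₁ : t ≤ 1) : f (t • X) ≤ t * f X := by
  simpa [hf₀] using hconv X 0 t ht₀ ht₁

namespace BM

lemma integrable (X : BM Ω) (ν : Measure Ω) [IsFiniteMeasure ν] : Integrable (X : Ω → ℝ) ν := by
  obtain ⟨hm, C, hC⟩ := X.2
  exact (integrable_const C).mono' hm.aestronglyMeasurable (ae_of_all _ hC)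

end BM

section RiskMeasure

variable {P : Measure Ω} {ρ : BM Ω → ℝ}

lemma coe_smul_indBM {A : Set Ω} (hA : MeasurableSet A) (k : ℝ) :
    ((k • indBM A hA : BM Ω) : Ω → ℝ) = A.indicator fun _ => k := by
  ext ω
  by_cases h : ω ∈ A <;> simp [indBM, h]

lemma integral_sub_le_rstarM (ρ : BM Ω → ℝ) (ν : Measure Ω) (X : BM Ω) :
    ((∫ ω, (X : Ω → ℝ) ω ∂ν - ρ X : ℝ) : EReal) ≤ rstarM ρ ν :=
  le_iSup (fun X : BM Ω => ((∫ ω, (X : Ω → ℝ) ω ∂ν - ρ X : ℝ) : EReal)) X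

lemma rstarM_nonneg (hnorm : ρ 0 = 0) (ν : Measure Ω) : 0 ≤ rstarM ρ ν := by
  simpa [hnorm] using integral_sub_le_rstarM ρ ν 0

lemma exists_rstarM_eq_coe (hnorm : ρ 0 = 0) {ν : Measure Ω} {X : BM Ω} (hν : rstarM ρ ν ≠ ⊤)
    (hX : (ρ X : EReal) = ((∫ ω, (X : Ω → ℝ) ω ∂ν : ℝ) : EReal) - rstarM ρ ν) :
    ∃ r : ℝ, 0 ≤ r ∧ rstarM ρ ν = r ∧ ρ X = ∫ ω, (X : Ω → ℝ) ω ∂ν - r := by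
  have h₀ := rstarM_nonneg hnorm ν
  have hr : ((rstarM ρ ν).toReal : EReal) = rstarM ρ ν :=
    EReal.coe_toReal hν (ne_bot_of_le_ne_bot EReal.zero_ne_bot h₀)
  refine ⟨_, EReal.toReal_nonneg h₀, hr.symm, ?_⟩
  rw [← hr, ← EReal.coe_sub] at hX
  exact_mod_cast hX

lemma apply_neg_smul_indBM_lt_zero
    (h : ∀ X : BM Ω, (∀ᵐ ω ∂P, 0 ≤ (X : Ω → ℝ) ω) → ¬ ((X : Ω → ℝ) =ᵐ[P] 0) → ρ (-X) < 0)
    {A : Set Ω} (hA : MeasurableSet A) (hPA : 0 < P A) {k : ℝ} (hk : 0 < k) :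
    ρ (-(k • indBM A hA)) < 0 := by
  refine h _ (ae_of_all _ fun ω => ?_) ?_ <;> rw [coe_smul_indBM]
  · exact Set.indicator_nonneg (fun _ _ => hk.le) ω
  · rw [Set.indicator_ae_eq_zero, Function.support_const hk.ne', Set.inter_univ]
    exact hPA.ne'

lemma apply_neg_lt_zero_of_neg_smul_indBM
    (hconv : ∀ X Y : BM Ω, ∀ t : ℝ, 0 ≤ t → t ≤ 1 →
      ρ (t • X + (1 - t) • Y) ≤ t * ρ X + (1 - t) * ρ Y)
    (hmono : ∀ X Y : BM Ω, (∀ᵐ ω ∂P, (X : Ω → ℝ) ω ≤ (Y : Ω → ℝ) ω) → ρ X ≤ ρ Y)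
    (hnorm : ρ 0 = 0)
    (h : ∀ (A : Set Ω) (hA : MeasurableSet A), 0 < P A →
      ∃ K : ℝ, ∀ k : ℝ, K ≤ k → ρ (-(k • indBM A hA)) < 0)
    {X : BM Ω} (hX₀ : ∀ᵐ ω ∂P, 0 ≤ (X : Ω → ℝ) ω) (hX : ¬ ((X : Ω → ℝ) =ᵐ[P] 0)) :
    ρ (-X) < 0 := by
  obtain ⟨ε, hε, hPA⟩ := exists_pos_measure_le_of_not_ae_eq_zero hX₀ hX
  have hA : MeasurableSet {ω | ε ≤ (X : Ω → ℝ) ω} := measurableSet_le measurable_const X.2.1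
  obtain ⟨K, hK⟩ := h _ hA hPA
  set k := max K ε
  have hk : 0 < k := hε.trans_le (le_max_right K ε)
  have hεA : ρ (-(ε • indBM _ hA)) < 0 :=
    calc ρ (-(ε • indBM _ hA)) = ρ ((ε / k) • -(k • indBM _ hA)) := by
          rw [smul_neg, smul_smul, div_mul_cancel₀ _ hk.ne']
      _ ≤ ε / k * ρ (-(k • indBM _ hA)) :=
          apply_smul_le_mul_of_convex hconv hnorm _ (by positivity)
            ((div_le_one hk).2 (le_max_right K ε))
      _ < 0 := mul_neg_of_pos_of_neg (by positivity) (hK k (le_max_left K ε))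
  refine (hmono _ _ ?_).trans_lt hεA
  filter_upwards [hX₀] with ω hω
  simp only [NegMemClass.coe_neg, Pi.neg_apply, coe_smul_indBM, neg_le_neg_iff]
  exact Set.indicator_apply_le' id fun _ => hω

lemma apply_neg_lt_zero_of_null_iff
    (hnorm : ρ 0 = 0)
    (hdom : ∀ ν : Measure Ω, rstarM ρ ν ≠ ⊤ → ν ≪ P ∧ IsFiniteMeasure ν)
    (hrep : ∀ X : BM Ω, ∃ ν : Measure Ω, rstarM ρ ν ≠ ⊤ ∧
      (ρ X : EReal) = ((∫ ω, (X : Ω → ℝ) ω ∂ν : ℝ) : EReal) - rstarM ρ ν)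
    (h : ∀ ν : Measure Ω, rstarM ρ ν = 0 → ∀ A : Set Ω, MeasurableSet A → (ν A = 0 ↔ P A = 0))
    {X : BM Ω} (hX₀ : ∀ᵐ ω ∂P, 0 ≤ (X : Ω → ℝ) ω) (hX : ¬ ((X : Ω → ℝ) =ᵐ[P] 0)) :
    ρ (-X) < 0 := by
  obtain ⟨ν, hν, hνX⟩ := hrep (-X)
  obtain ⟨hνP, hfin⟩ := hdom ν hν
  obtain ⟨r, hr₀, hνr, hρ⟩ := exists_rstarM_eq_coe hnorm hν hνX
  have hXν : ∀ᵐ ω ∂ν, 0 ≤ (X : Ω → ℝ) ω := hνP.ae_le hX₀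
  have hint : 0 ≤ ∫ ω, (X : Ω → ℝ) ω ∂ν := integral_nonneg_of_ae hXν
  simp only [NegMemClass.coe_neg, Pi.neg_apply, integral_neg] at hρ
  refine lt_of_le_of_ne (by linarith) fun hzero => hX ?_
  have hE₀ : rstarM ρ ν = 0 := by rw [hνr, show r = 0 by linarith, EReal.coe_zero]
  have hPν : P ≪ ν := .mk fun A hA hνA => (h ν hE₀ A hA).1 hνA
  refine hPν.ae_eq ((integral_eq_zero_iff_of_nonneg_ae hXν (BM.integrable X ν)).1 ?_)
  linarith

lemma measure_eq_zero_iff_of_rstarM_eq_zero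
    (hdom : ∀ ν : Measure Ω, rstarM ρ ν ≠ ⊤ → ν ≪ P ∧ IsFiniteMeasure ν)
    (h : ∀ (A : Set Ω) (hA : MeasurableSet A), 0 < P A →
      ∃ K : ℝ, ∀ k : ℝ, K ≤ k → ρ (-(k • indBM A hA)) < 0)
    {ν : Measure Ω} (hν : rstarM ρ ν = 0) {A : Set Ω} (hA : MeasurableSet A) :
    ν A = 0 ↔ P A = 0 := by
  refine ⟨fun hνA => ?_, fun hPA => (hdom ν (by simp [hν])).1 hPA⟩
  by_contra hPA
  obtain ⟨K, hK⟩ := h A hA (pos_iff_ne_zero.2 hPA)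
  have hle := integral_sub_le_rstarM ρ ν (-(K • indBM A hA))
  have hint : ∫ ω, ((-(K • indBM A hA) : BM Ω) : Ω → ℝ) ω ∂ν = 0 := by
    simp only [NegMemClass.coe_neg, Pi.neg_apply, integral_neg, coe_smul_indBM,
      integral_indicator_const _ hA, measureReal_def, hνA]
    simp
  have : 0 ≤ ρ (-(K • indBM A hA)) := by
    rw [hν, hint] at hle
    exact_mod_cast neg_nonpos.1 (by simpa using hle)
  exact (hK K le_rfl).not_ge this

end RiskMeasure

theorem stmt10_general (P : Measure Ω)
    (ρ : BM Ω → ℝ)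
    -- ρ is a risk measure: convex and monotone (ℙ-a.s. order)
    (hconv : ∀ X Y : BM Ω, ∀ t : ℝ, 0 ≤ t → t ≤ 1 →
      ρ (t • X + (1 - t) • Y) ≤ t * ρ X + (1 - t) * ρ Y)
    (hmono : ∀ X Y : BM Ω, (∀ᵐ ω ∂P, (X : Ω → ℝ) ω ≤ (Y : Ω → ℝ) ω) → ρ X ≤ ρ Y)
    -- ρ is normalised
    (hnorm : ρ 0 = 0)
    -- dom(ρ*) ⊆ (ca_ℙ)₊
    (hdom : ∀ ν : Measure Ω, rstarM ρ ν ≠ ⊤ → ν ≪ P ∧ IsFiniteMeasure ν)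
    -- dual representation with attained maximum
    (hrep : ∀ X : BM Ω, ∃ ν : Measure Ω, rstarM ρ ν ≠ ⊤ ∧
      (ρ X : EReal) = ((∫ ω, (X : Ω → ℝ) ω ∂ν : ℝ) : EReal) - rstarM ρ ν) :
    -- (i) ↔ (ii) ↔ (iii)
    ((∀ ν : Measure Ω, rstarM ρ ν = 0 →
        ∀ A : Set Ω, MeasurableSet A → (ν A = 0 ↔ P A = 0)) ↔
      (∀ (A : Set Ω) (hA : MeasurableSet A), 0 < P A →
        ∃ K : ℝ, ∀ k : ℝ, K ≤ k → ρ (-(k • indBM A hA)) < 0)) ∧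
    ((∀ (A : Set Ω) (hA : MeasurableSet A), 0 < P A →
        ∃ K : ℝ, ∀ k : ℝ, K ≤ k → ρ (-(k • indBM A hA)) < 0) ↔
      (∀ X : BM Ω, (∀ᵐ ω ∂P, 0 ≤ (X : Ω → ℝ) ω) →
        ¬ ((X : Ω → ℝ) =ᵐ[P] 0) → ρ (-X) < 0)) := by
  refine ⟨⟨fun h1 A hA hPA => ⟨1, fun _ hk => apply_neg_smul_indBM_lt_zero
      (fun X => apply_neg_lt_zero_of_null_iff hnorm hdom hrep h1) hA hPA (one_pos.trans_le hk)⟩,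
    fun h2 ν hν A hA => measure_eq_zero_iff_of_rstarM_eq_zero hdom h2 hν hA⟩,
    fun h2 X => apply_neg_lt_zero_of_neg_smul_indBM hconv hmono hnorm h2,
    fun h3 A hA hPA =>
      ⟨1, fun _ hk => apply_neg_smul_indBM_lt_zero h3 hA hPA (one_pos.trans_le hk)⟩⟩

theorem stmt10 (P : Measure Ω) [IsProbabilityMeasure P]
    (ρ : BM Ω → ℝ)
    -- ρ is a risk measure: convex and monotone (ℙ-a.s. order)
    (hconv : ∀ X Y : BM Ω, ∀ t : ℝ, 0 ≤ t → t ≤ 1 →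
      ρ (t • X + (1 - t) • Y) ≤ t * ρ X + (1 - t) * ρ Y)
    (hmono : ∀ X Y : BM Ω, (∀ᵐ ω ∂P, (X : Ω → ℝ) ω ≤ (Y : Ω → ℝ) ω) → ρ X ≤ ρ Y)
    -- ρ is normalised
    (hnorm : ρ 0 = 0)
    -- ρ is sensitive
    (hsens : ∀ X : BM Ω, (∀ᵐ ω ∂P, 0 ≤ (X : Ω → ℝ) ω) →
      ¬ ((X : Ω → ℝ) =ᵐ[P] 0) → 0 < ρ X)
    -- ρ is continuous from above
    (hca : ∀ (X : ℕ → BM Ω) (Y : BM Ω),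
      (∀ n m : ℕ, n ≤ m → X m ≤ X n) →
      (∀ ω, Filter.Tendsto (fun n => (X n : Ω → ℝ) ω) Filter.atTop (nhds ((Y : Ω → ℝ) ω))) →
      Filter.Tendsto (fun n => ρ (X n)) Filter.atTop (nhds (ρ Y)))
    -- dom(ρ*) ⊆ (ca_ℙ)₊
    (hdom : ∀ ν : Measure Ω, rstarM ρ ν ≠ ⊤ → ν ≪ P ∧ IsFiniteMeasure ν)
    -- dual representation with attained maximum
    (hrep : ∀ X : BM Ω, ∃ ν : Measure Ω, rstarM ρ ν ≠ ⊤ ∧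
      (ρ X : EReal) = ((∫ ω, (X : Ω → ℝ) ω ∂ν : ℝ) : EReal) - rstarM ρ ν) :
    -- (i) ↔ (ii) ↔ (iii)
    ((∀ ν : Measure Ω, rstarM ρ ν = 0 →
        ∀ A : Set Ω, MeasurableSet A → (ν A = 0 ↔ P A = 0)) ↔
      (∀ (A : Set Ω) (hA : MeasurableSet A), 0 < P A →
        ∃ K : ℝ, ∀ k : ℝ, K ≤ k → ρ (-(k • indBM A hA)) < 0)) ∧
    ((∀ (A : Set Ω) (hA : MeasurableSet A), 0 < P A →
        ∃ K : ℝ, ∀ k : ℝ, K ≤ k → ρ (-(k • indBM A hA)) < 0) ↔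
      (∀ X : BM Ω, (∀ᵐ ω ∂P, 0 ≤ (X : Ω → ℝ) ω) →
        ¬ ((X : Ω → ℝ) =ᵐ[P] 0) → ρ (-X) < 0)) :=
  stmt10_general P ρ hconv hmono hnorm hdom hrep
end

section
/- Let $\rho_{\tilde{\mathcal{R}}}(X) := \sup_{\mu \in D} \int X\, d\mu - \alpha(\mu)$ on $L^{\mathcal{R}}$, where $D \subseteq (\mathbf{ca}_{\mathbb{P}})_+$ and $\alpha \ge 0$, and suppose every $X \in L^{\mathcal{R}}$ is $\mu$-integrable for $\mu \in D$. Then for every $X \in L^{\mathcal{R}}$: $\rho_{\tilde{\mathcal{R}}}(X) = \sup_{m \in \mathbb{N}} \rho_{\tilde{\mathcal{R}}}(X \wedge m)$. -/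
/-!
Statement 14 (eq. (approx)): For the extension
`ρ̃(X) = sup_{μ ∈ D} ∫ X dμ - α(μ)` on the Minkowski domain,
`ρ̃(X) = sup_m ρ̃(X ∧ m)`.
-/

open MeasureTheory

variable {Ω : Type*} [MeasurableSpace Ω]

/-- `ρ̃(X) = sup_{μ ∈ D} ∫ X dμ - α(μ)`, with values in `EReal`. -/
noncomputable def rhoTilde (D : Set (Measure Ω)) (α : Measure Ω → ℝ)
    (X : Ω → ℝ) : EReal :=
  ⨆ μ ∈ D, ((∫ ω, X ω ∂μ - α μ : ℝ) : EReal)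

/-!
For each `μ ∈ D` the truncations `X ∧ m` increase pointwise to `X` and are dominated in absolute
value by `|X|`, so by monotone convergence `∫ X ∧ m dμ - α(μ)` increases to `∫ X dμ - α(μ)`.
Hence each term of the supremum defining `ρ̃(X)` is itself a supremum over `m`, and the two
suprema commute.
-/

open Filter Topology

lemma abs_min_natCast_le_abs (x : ℝ) (m : ℕ) : |min x m| ≤ |x| :=
  abs_le.mpr ⟨le_min (neg_abs_le x) ((neg_nonpos.mpr (abs_nonneg x)).trans m.cast_nonneg),
    (min_le_left _ _).trans (le_abs_self x)⟩

lemma monotone_min_natCast (x : ℝ) : Monotone fun m : ℕ => min x m :=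
  fun _ _ hmn => min_le_min_left x (Nat.cast_le.mpr hmn)

lemma tendsto_min_natCast_atTop (x : ℝ) : Tendsto (fun m : ℕ => min x m) atTop (𝓝 x) :=
  tendsto_const_nhds.congr' <|
    (tendsto_natCast_atTop_atTop.eventually_ge_atTop x).mono fun _ hm => (min_eq_left hm).symm

section Truncation

variable {μ : Measure Ω} {f : Ω → ℝ}

lemma MeasureTheory.Integrable.min_natCast (hf : Integrable f μ) (m : ℕ) :
    Integrable (fun ω => min (f ω) m) μ :=
  hf.mono (hf.1.inf aestronglyMeasurable_const) <|
    ae_of_all _ fun ω => by simpa only [Real.norm_eq_abs] using abs_min_natCast_le_abs (f ω) m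

lemma tendsto_integral_min_natCast (hf : Integrable f μ) :
    Tendsto (fun m : ℕ => ∫ ω, min (f ω) m ∂μ) atTop (𝓝 (∫ ω, f ω ∂μ)) :=
  integral_tendsto_of_tendsto_of_monotone hf.min_natCast hf
    (ae_of_all _ fun ω => monotone_min_natCast (f ω))
    (ae_of_all _ fun ω => tendsto_min_natCast_atTop (f ω))

lemma iSup_integral_min_natCast_sub (hf : Integrable f μ) (c : ℝ) :
    ⨆ m : ℕ, ((∫ ω, min (f ω) m ∂μ - c : ℝ) : EReal) = ((∫ ω, f ω ∂μ - c : ℝ) : EReal) := by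
  refine iSup_eq_of_tendsto (fun m n hmn => EReal.coe_le_coe_iff.mpr ?_) ?_
  · exact sub_le_sub_right (integral_mono (hf.min_natCast m) (hf.min_natCast n)
      fun ω => monotone_min_natCast (f ω) hmn) c
  · exact (continuous_coe_real_ereal.tendsto _).comp
      ((tendsto_integral_min_natCast hf).sub_const c)

end Truncation

theorem stmt14_general
    (D : Set (Measure Ω))
    (α : Measure Ω → ℝ)
    -- X ∈ L^R: X is μ-integrable for every μ ∈ D
    (X : Ω → ℝ) (hXint : ∀ μ ∈ D, Integrable X μ) :
    rhoTilde D α X = ⨆ m : ℕ, rhoTilde D α (fun ω => min (X ω) (m : ℝ)) := by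
  calc rhoTilde D α X
      = ⨆ μ ∈ D, ⨆ m : ℕ, ((∫ ω, min (X ω) m ∂μ - α μ : ℝ) : EReal) :=
        iSup_congr fun μ => iSup_congr fun hμ =>
          (iSup_integral_min_natCast_sub (hXint μ hμ) (α μ)).symm
    _ = ⨆ m : ℕ, rhoTilde D α (fun ω => min (X ω) (m : ℝ)) := by
        simp only [rhoTilde, iSup_comm (ι' := ℕ)]

theorem stmt14 (P : Measure Ω) [IsProbabilityMeasure P]
    (D : Set (Measure Ω)) (hD : D.Nonempty)
    -- D ⊆ (ca_ℙ)₊ consists of (positive) finite measures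
    (hDfin : ∀ μ ∈ D, IsFiniteMeasure μ) (hDac : ∀ μ ∈ D, μ ≪ P)
    -- the penalty is nonnegative
    (α : Measure Ω → ℝ) (hα : ∀ μ ∈ D, 0 ≤ α μ)
    -- X ∈ L^R: X is μ-integrable for every μ ∈ D
    (X : Ω → ℝ) (hXm : Measurable X) (hXint : ∀ μ ∈ D, Integrable X μ) :
    rhoTilde D α X = ⨆ m : ℕ, rhoTilde D α (fun ω => min (X ω) (m : ℝ)) :=
  stmt14_general D α X hXint
end

section
/- Let $f: L^{\mathcal{R}} \to (-\infty, \infty]$ be proper, monotone, and convex, let $X \in \mathrm{dom}(f)$, and let $\ell = \mu \oplus \lambda \in \partial f(X)$ be a subgradient with regular part $\mu \in \mathbf{ca}_{\mathbb{P}}$ and singular part $\lambda$ (vanishing on $M^{\mathcal{R}}$). If there exists $s > 0$ such that $X + sX^+ \in \mathrm{dom}(f)$ and $f(X) = \lim_{n \to \infty} f(X + sX^+\mathbf{1}_{\{X^+ \ge n\}})$ (tail continuity at $X$ along $sX^+$), then $\lambda(X^+) = 0$ and hence $\int X\, d\mu \ge \ell(X)$. -/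
/-!
Write `λ = ℓ - ∫ · d(ν₁ - ν₂)` for the singular part. It is nonnegative on nonnegative `Y`:
`ℓ` is positive because `f` is monotone, `λ` vanishes on the bounded truncations `min Y n`,
and `∫ min Y n → ∫ Y`. It also only sees tails, `λ(X⁺) = λ(X⁺ 𝟙{X⁺ ≥ n})`, since the
difference is bounded. The subgradient inequality bounds `ℓ(X⁺ 𝟙{X⁺ ≥ n})` by
`(f(X + s X⁺ 𝟙{X⁺ ≥ n}) - f(X)) / s`, which tends to `0` by tail continuity, while the regular
part of the tails tends to `0` by dominated convergence. Hence `λ(X⁺) = 0`, and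
`ℓ(X) - ∫ X dμ = -λ(X⁻) ≤ 0`.
-/

open MeasureTheory ENNReal

variable {Ω : Type*} [MeasurableSpace Ω]

/-- The Minkowski domain `L^R`. -/
def LRdom (D : Set (Measure Ω)) : Set (Ω → ℝ) :=
  {X | Measurable X ∧ ∀ μ ∈ D, Integrable X μ}

open Filter Topology

lemma abs_min_le_abs_of_nonneg {α : Type*} [AddCommGroup α] [LinearOrder α]
    [IsOrderedAddMonoid α] (a : α) {b : α} (hb : 0 ≤ b) : |min a b| ≤ |a| := by
  rcases le_total a b with h | h
  · rw [min_eq_left h]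
  · rw [min_eq_right h, abs_of_nonneg hb]; exact h.trans (le_abs_self a)

section LRdom

variable {D : Set (Measure Ω)} {Y Z : Ω → ℝ}

lemma LRdom.add (hY : Y ∈ LRdom D) (hZ : Z ∈ LRdom D) : Y + Z ∈ LRdom D :=
  ⟨hY.1.add hZ.1, fun μ hμ => (hY.2 μ hμ).add (hZ.2 μ hμ)⟩

lemma LRdom.sub (hY : Y ∈ LRdom D) (hZ : Z ∈ LRdom D) : Y - Z ∈ LRdom D :=
  ⟨hY.1.sub hZ.1, fun μ hμ => (hY.2 μ hμ).sub (hZ.2 μ hμ)⟩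

lemma LRdom.const_smul (hY : Y ∈ LRdom D) (c : ℝ) : c • Y ∈ LRdom D :=
  ⟨hY.1.const_smul c, fun μ hμ => (hY.2 μ hμ).smul c⟩

lemma LRdom.posPart (hY : Y ∈ LRdom D) : (fun ω => max (Y ω) 0) ∈ LRdom D :=
  ⟨hY.1.max measurable_const, fun μ hμ => (hY.2 μ hμ).pos_part⟩

lemma LRdom.negPart (hY : Y ∈ LRdom D) : (fun ω => max (-Y ω) 0) ∈ LRdom D :=
  ⟨hY.1.neg.max measurable_const, fun μ hμ => (hY.2 μ hμ).neg.pos_part⟩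

lemma LRdom.indicator (hY : Y ∈ LRdom D) {s : Set Ω} (hs : MeasurableSet s) :
    s.indicator Y ∈ LRdom D :=
  ⟨hY.1.indicator hs, fun μ hμ => (hY.2 μ hμ).indicator hs⟩

lemma LRdom.min_natCast (hY : Y ∈ LRdom D) (n : ℕ) : (fun ω => min (Y ω) n) ∈ LRdom D := by
  refine ⟨hY.1.min measurable_const, fun μ hμ => (hY.2 μ hμ).mono
    (hY.1.min measurable_const).aestronglyMeasurable (Eventually.of_forall fun ω => ?_)⟩
  simpa only [Real.norm_eq_abs] using abs_min_le_abs_of_nonneg (Y ω) n.cast_nonneg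

end LRdom

section Integrals

variable {ν : Measure Ω} {Y : Ω → ℝ}

lemma tendsto_integral_min_natCast_s18 (hY : Integrable Y ν) :
    Tendsto (fun n : ℕ => ∫ ω, min (Y ω) n ∂ν) atTop (𝓝 (∫ ω, Y ω ∂ν)) := by
  refine tendsto_integral_of_dominated_convergence (fun ω => ‖Y ω‖)
    (fun n => hY.aestronglyMeasurable.inf aestronglyMeasurable_const) hY.norm
    (fun n => Eventually.of_forall fun ω => ?_) (Eventually.of_forall fun ω => ?_)
  · simpa only [Real.norm_eq_abs] using abs_min_le_abs_of_nonneg (Y ω) n.cast_nonneg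
  · refine tendsto_const_nhds.congr' ?_
    filter_upwards [eventually_ge_atTop ⌈Y ω⌉₊] with n hn
    exact (min_eq_left ((Nat.le_ceil _).trans (Nat.cast_le.2 hn))).symm

lemma tendsto_integral_indicator_natCast_le_abs (hY : Integrable Y ν) (hYm : Measurable Y) :
    Tendsto (fun n : ℕ => ∫ ω, {ω' | (n : ℝ) ≤ |Y ω'|}.indicator Y ω ∂ν) atTop (𝓝 0) := by
  rw [← integral_zero Ω ℝ]
  refine tendsto_integral_of_dominated_convergence (fun ω => ‖Y ω‖)
    (fun n => (hYm.indicator (measurableSet_le measurable_const hYm.abs)).aestronglyMeasurable)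
    hY.norm (fun n => Eventually.of_forall fun ω => norm_indicator_le_norm_self _ _)
    (Eventually.of_forall fun ω => ?_)
  refine tendsto_const_nhds.congr' ?_
  filter_upwards [eventually_gt_atTop ⌈|Y ω|⌉₊] with n hn
  refine (Set.indicator_of_notMem ?_ _).symm
  simpa using (Nat.le_ceil _).trans_lt (Nat.cast_lt.2 hn)

end Integrals

lemma EReal.le_toReal_sub_toReal_of_add_le {a b : EReal} {x : ℝ} (ha : a ≠ ⊥) (ha' : a ≠ ⊤)
    (hb : b ≠ ⊤) (h : a + x ≤ b) : x ≤ b.toReal - a.toReal := by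
  lift a to ℝ using ⟨ha', ha⟩
  have hb' : b ≠ ⊥ := ne_bot_of_le_ne_bot (EReal.coe_ne_bot (a + x)) h
  lift b to ℝ using ⟨hb, hb'⟩
  simp only [EReal.toReal_coe]
  have := EReal.coe_le_coe_iff.1 h
  linarith

noncomputable def singularPart (ℓ : (Ω → ℝ) → ℝ) (ν₁ ν₂ : Measure Ω) (Y : Ω → ℝ) : ℝ :=
  ℓ Y - (∫ ω, Y ω ∂ν₁ - ∫ ω, Y ω ∂ν₂)

section SingularPart

variable {D : Set (Measure Ω)} {f : (Ω → ℝ) → EReal} {ℓ : (Ω → ℝ) → ℝ} {ν₁ ν₂ : Measure Ω}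
  {X Y Z : Ω → ℝ}

lemma map_sub_of_map_add (hadd : ∀ Y ∈ LRdom D, ∀ Z ∈ LRdom D, ℓ (Y + Z) = ℓ Y + ℓ Z)
    (hY : Y ∈ LRdom D) (hZ : Z ∈ LRdom D) : ℓ (Y - Z) = ℓ Y - ℓ Z := by
  have := hadd _ (LRdom.sub hY hZ) _ hZ
  rw [sub_add_cancel] at this
  linarith

lemma singularPart_sub (hadd : ∀ Y ∈ LRdom D, ∀ Z ∈ LRdom D, ℓ (Y + Z) = ℓ Y + ℓ Z)
    (hint : ∀ Y ∈ LRdom D, Integrable Y ν₁ ∧ Integrable Y ν₂)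
    (hY : Y ∈ LRdom D) (hZ : Z ∈ LRdom D) :
    singularPart ℓ ν₁ ν₂ (Y - Z) = singularPart ℓ ν₁ ν₂ Y - singularPart ℓ ν₁ ν₂ Z := by
  simp only [singularPart, map_sub_of_map_add hadd hY hZ, Pi.sub_apply,
    integral_sub (hint Y hY).1 (hint Z hZ).1, integral_sub (hint Y hY).2 (hint Z hZ).2]
  ring

lemma singularPart_indicator_le_abs
    (hadd : ∀ Y ∈ LRdom D, ∀ Z ∈ LRdom D, ℓ (Y + Z) = ℓ Y + ℓ Z)
    (hint : ∀ Y ∈ LRdom D, Integrable Y ν₁ ∧ Integrable Y ν₂)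
    (hreg : ∀ Y : Ω → ℝ, Measurable Y → (∃ C : ℝ, ∀ ω, |Y ω| ≤ C) →
      ℓ Y = ∫ ω, Y ω ∂ν₁ - ∫ ω, Y ω ∂ν₂)
    (hY : Y ∈ LRdom D) (r : ℝ) :
    singularPart ℓ ν₁ ν₂ ({ω | r ≤ |Y ω|}.indicator Y) = singularPart ℓ ν₁ ν₂ Y := by
  have hS : MeasurableSet {ω | r ≤ |Y ω|} := measurableSet_le measurable_const hY.1.abs
  have hbdd : singularPart ℓ ν₁ ν₂ (Y - {ω | r ≤ |Y ω|}.indicator Y) = 0 := by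
    refine sub_eq_zero.2 (hreg _ (hY.1.sub (hY.1.indicator hS)) ⟨|r|, fun ω => ?_⟩)
    by_cases hω : r ≤ |Y ω|
    · simp [Set.indicator_of_mem (show ω ∈ {ω | r ≤ |Y ω|} from hω)]
    · simpa [Set.indicator_of_notMem (show ω ∉ {ω | r ≤ |Y ω|} from hω)] using
        (not_le.1 hω).le.trans (le_abs_self r)
  rw [singularPart_sub hadd hint hY (LRdom.indicator hY hS)] at hbdd
  linarith

lemma le_div_of_subgradient (hXbot : f X ≠ ⊥) (hXtop : f X ≠ ⊤)
    (hsmul : ∀ Y ∈ LRdom D, ∀ c : ℝ, ℓ (c • Y) = c * ℓ Y)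
    (hsub : ∀ Y ∈ LRdom D, f X + ((ℓ (Y - X) : ℝ) : EReal) ≤ f Y)
    (hX : X ∈ LRdom D) (hZ : Z ∈ LRdom D) {s : ℝ} (hs : 0 < s) (hfin : f (X + s • Z) ≠ ⊤) :
    ℓ Z ≤ ((f (X + s • Z)).toReal - (f X).toReal) / s := by
  have h := hsub _ (LRdom.add hX (LRdom.const_smul hZ s))
  rw [add_sub_cancel_left, hsmul Z hZ] at h
  rw [le_div_iff₀ hs, mul_comm]
  exact EReal.le_toReal_sub_toReal_of_add_le hXbot hXtop hfin h

lemma subgradient_nonneg_of_monotone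
    (hmono : ∀ Y ∈ LRdom D, ∀ Z ∈ LRdom D, (∀ ω, Y ω ≤ Z ω) → f Y ≤ f Z)
    (hXbot : f X ≠ ⊥) (hXtop : f X ≠ ⊤)
    (hsmul : ∀ Y ∈ LRdom D, ∀ c : ℝ, ℓ (c • Y) = c * ℓ Y)
    (hsub : ∀ Y ∈ LRdom D, f X + ((ℓ (Y - X) : ℝ) : EReal) ≤ f Y)
    (hX : X ∈ LRdom D) (hZ : Z ∈ LRdom D) (hZ0 : 0 ≤ Z) : 0 ≤ ℓ Z := by
  have hXZ : X - Z ∈ LRdom D := LRdom.sub hX hZ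
  have h := (hsub _ hXZ).trans (hmono _ hXZ _ hX fun ω => sub_le_self _ (hZ0 ω))
  rw [sub_sub_cancel_left, ← neg_one_smul ℝ Z, hsmul Z hZ] at h
  have := EReal.le_toReal_sub_toReal_of_add_le hXbot hXtop hXtop h
  linarith

lemma singularPart_nonneg (hpos : ∀ Z ∈ LRdom D, 0 ≤ Z → 0 ≤ ℓ Z)
    (hadd : ∀ Y ∈ LRdom D, ∀ Z ∈ LRdom D, ℓ (Y + Z) = ℓ Y + ℓ Z)
    (hint : ∀ Y ∈ LRdom D, Integrable Y ν₁ ∧ Integrable Y ν₂)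
    (hreg : ∀ Y : Ω → ℝ, Measurable Y → (∃ C : ℝ, ∀ ω, |Y ω| ≤ C) →
      ℓ Y = ∫ ω, Y ω ∂ν₁ - ∫ ω, Y ω ∂ν₂)
    (hY : Y ∈ LRdom D) (hY0 : 0 ≤ Y) : 0 ≤ singularPart ℓ ν₁ ν₂ Y := by
  have htrunc : ∀ n : ℕ, ∫ ω, min (Y ω) n ∂ν₁ - ∫ ω, min (Y ω) n ∂ν₂ ≤ ℓ Y := by
    intro n
    have hmin := LRdom.min_natCast hY n
    have hbdd := hreg _ hmin.1 ⟨n, fun ω => by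
      rw [abs_of_nonneg (le_min (hY0 ω) n.cast_nonneg)]; exact min_le_right _ _⟩
    have hle := hpos _ (LRdom.sub hY hmin) fun ω => sub_nonneg.2 (min_le_left (Y ω) n)
    rw [map_sub_of_map_add hadd hY hmin] at hle
    linarith
  have hlim := (tendsto_integral_min_natCast_s18 (hint Y hY).1).sub
    (tendsto_integral_min_natCast_s18 (hint Y hY).2)
  exact sub_nonneg.2 (le_of_tendsto' hlim htrunc)

lemma singularPart_nonpos_of_tendsto_tail
    (hmono : ∀ Y ∈ LRdom D, ∀ Z ∈ LRdom D, (∀ ω, Y ω ≤ Z ω) → f Y ≤ f Z)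
    (hXbot : f X ≠ ⊥) (hXtop : f X ≠ ⊤)
    (hadd : ∀ Y ∈ LRdom D, ∀ Z ∈ LRdom D, ℓ (Y + Z) = ℓ Y + ℓ Z)
    (hsmul : ∀ Y ∈ LRdom D, ∀ c : ℝ, ℓ (c • Y) = c * ℓ Y)
    (hint : ∀ Y ∈ LRdom D, Integrable Y ν₁ ∧ Integrable Y ν₂)
    (hreg : ∀ Y : Ω → ℝ, Measurable Y → (∃ C : ℝ, ∀ ω, |Y ω| ≤ C) →
      ℓ Y = ∫ ω, Y ω ∂ν₁ - ∫ ω, Y ω ∂ν₂)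
    (hsub : ∀ Y ∈ LRdom D, f X + ((ℓ (Y - X) : ℝ) : EReal) ≤ f Y)
    (hX : X ∈ LRdom D) (hY : Y ∈ LRdom D) (hY0 : 0 ≤ Y) {s : ℝ} (hs : 0 < s)
    (hfin : f (X + s • Y) ≠ ⊤)
    (htend : Tendsto (fun n : ℕ => f (X + s • {ω | (n : ℝ) ≤ Y ω}.indicator Y)) atTop
      (𝓝 (f X))) :
    singularPart ℓ ν₁ ν₂ Y ≤ 0 := by
  set tail : ℕ → Ω → ℝ := fun n => {ω | (n : ℝ) ≤ Y ω}.indicator Y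
  have htail_mem (n : ℕ) : tail n ∈ LRdom D :=
    LRdom.indicator hY (measurableSet_le measurable_const hY.1)
  have htail_eq (n : ℕ) : {ω | (n : ℝ) ≤ |Y ω|}.indicator Y = tail n := by
    simp only [tail, abs_of_nonneg (hY0 _)]
  have hbound (n : ℕ) : singularPart ℓ ν₁ ν₂ Y ≤
      ((f (X + s • tail n)).toReal - (f X).toReal) / s -
        (∫ ω, tail n ω ∂ν₁ - ∫ ω, tail n ω ∂ν₂) := by
    have htail_fin : f (X + s • tail n) ≠ ⊤ := ne_top_of_le_ne_top hfin <|
      hmono _ (LRdom.add hX (LRdom.const_smul (htail_mem n) s)) _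
        (LRdom.add hX (LRdom.const_smul hY s)) fun ω => by
          simp only [Pi.add_apply, Pi.smul_apply, smul_eq_mul]
          gcongr
          exact Set.indicator_le_self' (fun ω _ => hY0 ω) ω
    rw [← singularPart_indicator_le_abs hadd hint hreg hY n, htail_eq, singularPart]
    gcongr
    exact le_div_of_subgradient hXbot hXtop hsmul hsub hX (htail_mem n) hs htail_fin
  have hf : Tendsto (fun n : ℕ => (f (X + s • tail n)).toReal) atTop (𝓝 (f X).toReal) :=
    (EReal.tendsto_toReal hXtop hXbot).comp htend
  have hint_tail (ν : Measure Ω) (hν : Integrable Y ν) :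
      Tendsto (fun n : ℕ => ∫ ω, tail n ω ∂ν) atTop (𝓝 0) := by
    simpa only [htail_eq] using tendsto_integral_indicator_natCast_le_abs hν hY.1
  have hlim := ((hf.sub_const (f X).toReal).div_const s).sub
    ((hint_tail ν₁ (hint Y hY).1).sub (hint_tail ν₂ (hint Y hY).2))
  simpa using ge_of_tendsto' hlim hbound

lemma singularPart_le_posPart (hpos : ∀ Z ∈ LRdom D, 0 ≤ Z → 0 ≤ ℓ Z)
    (hadd : ∀ Y ∈ LRdom D, ∀ Z ∈ LRdom D, ℓ (Y + Z) = ℓ Y + ℓ Z)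
    (hint : ∀ Y ∈ LRdom D, Integrable Y ν₁ ∧ Integrable Y ν₂)
    (hreg : ∀ Y : Ω → ℝ, Measurable Y → (∃ C : ℝ, ∀ ω, |Y ω| ≤ C) →
      ℓ Y = ∫ ω, Y ω ∂ν₁ - ∫ ω, Y ω ∂ν₂)
    (hX : X ∈ LRdom D) :
    singularPart ℓ ν₁ ν₂ X ≤ singularPart ℓ ν₁ ν₂ (fun ω => max (X ω) 0) := by
  have hnegPart := singularPart_nonneg hpos hadd hint hreg (LRdom.negPart hX)
    fun ω => le_max_right (-X ω) 0
  have hsplit := singularPart_sub hadd hint (LRdom.posPart hX) (LRdom.negPart hX)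
  rw [show ((fun ω => max (X ω) 0) - fun ω => max (-X ω) 0) = X from
    funext fun ω => max_zero_sub_eq_self (X ω)] at hsplit
  linarith

end SingularPart

theorem stmt18_general
    (D : Set (Measure Ω))
    -- f is proper, monotone and convex on L^R
    (f : (Ω → ℝ) → EReal)
    (hproper : ∀ Y, f Y ≠ ⊥)
    (hmono : ∀ Y ∈ LRdom D, ∀ Z ∈ LRdom D, (∀ ω, Y ω ≤ Z ω) → f Y ≤ f Z)
    -- X ∈ dom f
    (X : Ω → ℝ) (hX : X ∈ LRdom D) (hXdom : f X ≠ ⊤)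
    -- ℓ = μ ⊕ λ is a subgradient of f at X, with regular part μ = ν₁ - ν₂
    (ℓ : (Ω → ℝ) → ℝ)
    (hadd : ∀ Y ∈ LRdom D, ∀ Z ∈ LRdom D, ℓ (Y + Z) = ℓ Y + ℓ Z)
    (hsmul : ∀ Y ∈ LRdom D, ∀ c : ℝ, ℓ (c • Y) = c * ℓ Y)
    (ν₁ ν₂ : Measure Ω)
    (hint : ∀ Y ∈ LRdom D, Integrable Y ν₁ ∧ Integrable Y ν₂)
    -- the singular part λ = ℓ - ∫ · dμ vanishes on bounded measurable
    -- functions (hence on M^R)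
    (hreg : ∀ Y : Ω → ℝ, Measurable Y → (∃ C : ℝ, ∀ ω, |Y ω| ≤ C) →
      ℓ Y = ∫ ω, Y ω ∂ν₁ - ∫ ω, Y ω ∂ν₂)
    -- ℓ ∈ ∂f(X)
    (hsub : ∀ Y ∈ LRdom D, f X + ((ℓ (Y - X) : ℝ) : EReal) ≤ f Y)
    -- tail continuity at X along s X⁺ for some s > 0
    (htail : ∃ s : ℝ, 0 < s ∧
      f (fun ω => X ω + s * max (X ω) 0) ≠ ⊤ ∧
      Filter.Tendsto
        (fun n : ℕ => f (fun ω => X ω +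
          s * Set.indicator {ω' | (n : ℝ) ≤ max (X ω') 0}
                (fun ω' => max (X ω') 0) ω))
        Filter.atTop (nhds (f X))) :
    -- λ(X⁺) = 0, i.e. ℓ agrees with its regular part at X⁺, and ∫ X dμ ≥ ℓ(X)
    ℓ (fun ω => max (X ω) 0)
        = ∫ ω, max (X ω) 0 ∂ν₁ - ∫ ω, max (X ω) 0 ∂ν₂ ∧
    ℓ X ≤ ∫ ω, X ω ∂ν₁ - ∫ ω, X ω ∂ν₂ := by
  obtain ⟨s, hs, hfin, htend⟩ := htail
  have hpos : ∀ Z ∈ LRdom D, 0 ≤ Z → 0 ≤ ℓ Z := fun _ hZ hZ0 =>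
    subgradient_nonneg_of_monotone hmono (hproper X) hXdom hsmul hsub hX hZ hZ0
  have hXp_zero : singularPart ℓ ν₁ ν₂ (fun ω => max (X ω) 0) = 0 :=
    le_antisymm
      (singularPart_nonpos_of_tendsto_tail hmono (hproper X) hXdom hadd hsmul hint hreg hsub
        hX (LRdom.posPart hX) (fun ω => le_max_right _ _) hs hfin htend)
      (singularPart_nonneg hpos hadd hint hreg (LRdom.posPart hX) fun ω => le_max_right _ _)
  have hX_nonpos : singularPart ℓ ν₁ ν₂ X ≤ 0 :=
    hXp_zero ▸ singularPart_le_posPart hpos hadd hint hreg hX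
  exact ⟨sub_eq_zero.1 hXp_zero, sub_nonpos.1 hX_nonpos⟩

theorem stmt18 (P : Measure Ω) [IsProbabilityMeasure P]
    (D : Set (Measure Ω)) (hD : D.Nonempty)
    (hDfin : ∀ μ ∈ D, IsFiniteMeasure μ) (hDac : ∀ μ ∈ D, μ ≪ P)
    -- f is proper, monotone and convex on L^R
    (f : (Ω → ℝ) → EReal)
    (hproper : ∀ Y, f Y ≠ ⊥)
    (hmono : ∀ Y ∈ LRdom D, ∀ Z ∈ LRdom D, (∀ ω, Y ω ≤ Z ω) → f Y ≤ f Z)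
    (hconv : ∀ Y ∈ LRdom D, ∀ Z ∈ LRdom D, ∀ t : ℝ, 0 ≤ t → t ≤ 1 →
      f (t • Y + (1 - t) • Z) ≤ (t : EReal) * f Y + ((1 - t : ℝ) : EReal) * f Z)
    -- X ∈ dom f
    (X : Ω → ℝ) (hX : X ∈ LRdom D) (hXdom : f X ≠ ⊤)
    -- ℓ = μ ⊕ λ is a subgradient of f at X, with regular part μ = ν₁ - ν₂
    (ℓ : (Ω → ℝ) → ℝ)
    (hadd : ∀ Y ∈ LRdom D, ∀ Z ∈ LRdom D, ℓ (Y + Z) = ℓ Y + ℓ Z)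
    (hsmul : ∀ Y ∈ LRdom D, ∀ c : ℝ, ℓ (c • Y) = c * ℓ Y)
    (ν₁ ν₂ : Measure Ω) (hν₁ : IsFiniteMeasure ν₁) (hν₂ : IsFiniteMeasure ν₂)
    (hν₁P : ν₁ ≪ P) (hν₂P : ν₂ ≪ P)
    (hint : ∀ Y ∈ LRdom D, Integrable Y ν₁ ∧ Integrable Y ν₂)
    -- the singular part λ = ℓ - ∫ · dμ vanishes on bounded measurable
    -- functions (hence on M^R)
    (hreg : ∀ Y : Ω → ℝ, Measurable Y → (∃ C : ℝ, ∀ ω, |Y ω| ≤ C) →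
      ℓ Y = ∫ ω, Y ω ∂ν₁ - ∫ ω, Y ω ∂ν₂)
    -- ℓ ∈ ∂f(X)
    (hsub : ∀ Y ∈ LRdom D, f X + ((ℓ (Y - X) : ℝ) : EReal) ≤ f Y)
    -- tail continuity at X along s X⁺ for some s > 0
    (htail : ∃ s : ℝ, 0 < s ∧
      f (fun ω => X ω + s * max (X ω) 0) ≠ ⊤ ∧
      Filter.Tendsto
        (fun n : ℕ => f (fun ω => X ω +
          s * Set.indicator {ω' | (n : ℝ) ≤ max (X ω') 0}
                (fun ω' => max (X ω') 0) ω))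
        Filter.atTop (nhds (f X))) :
    -- λ(X⁺) = 0, i.e. ℓ agrees with its regular part at X⁺, and ∫ X dμ ≥ ℓ(X)
    ℓ (fun ω => max (X ω) 0)
        = ∫ ω, max (X ω) 0 ∂ν₁ - ∫ ω, max (X ω) 0 ∂ν₂ ∧
    ℓ X ≤ ∫ ω, X ω ∂ν₁ - ∫ ω, X ω ∂ν₂ :=
  stmt18_general D f hproper hmono X hX hXdom ℓ hadd hsmul ν₁ ν₂ hint hreg hsub htail
end
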